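/- Let φ : ℝ → ℝ be a C³ function with φ' ≥ 0, φ' ≤ β φ, and |φ^{(j)}| ≤ β^j φ for j = 2,3, where β > 0, and φ ≥ 0. If u is a smooth solution of ∂_t u + ∂_x³ u + u^k ∂_x u = 0 decaying appropriately, then (d/dt) ∫ u² φ dx ≤ β³ ∫ u² φ dx + (2β/(k+2)) ‖u(·,t)‖_{L^∞}^k ∫ u² φ dx. -/

import Mathlib

open MeasureTheory Filter Topology

lemma hcs_of_factor {v g : ℝ → ℝ} (hv : HasCompactSupport v)
    (h : ∀ x, v x = 0 → g x = 0) : HasCompactSupport g := by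
  apply IsCompact.of_isClosed_subset hv (isClosed_tsupport g)
  apply closure_mono
  intro x hx
  simp only [Function.mem_support] at hx ⊢
  exact fun h0 => hx (h x h0)

lemma integral_deriv_eq_zero_cs {W : ℝ → ℝ}
    (hd : ∀ x, DifferentiableAt ℝ W x) (hW : HasCompactSupport W)
    (hc : Continuous (deriv W)) : ∫ x, deriv W x = 0 := by
  obtain ⟨R₀, hR₀⟩ := hW.isBounded.subset_closedBall 0
  set R := max R₀ 0 with hR_def
  have hR : tsupport W ⊆ Metric.closedBall 0 R :=
    hR₀.trans (Metric.closedBall_subset_closedBall (le_max_left _ _))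
  have hzero : ∀ x : ℝ, R < |x| → W x = 0 := by
    intro x hx
    apply image_eq_zero_of_notMem_tsupport
    intro hmem
    have := hR hmem
    simp only [Metric.mem_closedBall, Real.dist_eq, sub_zero] at this
    linarith
  have hzero' : ∀ x : ℝ, R < |x| → deriv W x = 0 := by
    intro x hx
    apply Function.notMem_support.mp
    intro hmem
    have hmem' := support_deriv_subset hmem
    have := hR hmem'
    simp only [Metric.mem_closedBall, Real.dist_eq, sub_zero] at this
    linarith
  have hR0 : 0 ≤ R := le_max_right _ _
  have hab : -(R+1) ≤ R+1 := by linarith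
  have h1 : ∀ x : ℝ, x ∉ Set.Ioc (-(R+1)) (R+1) → deriv W x = 0 := by
    intro x hx
    simp only [Set.mem_Ioc, not_and_or, not_lt, not_le] at hx
    rcases hx with hx | hx
    · exact hzero' x (by rw [abs_of_nonpos (by linarith)]; linarith)
    · exact hzero' x (by rw [abs_of_nonneg (by linarith)]; linarith)
  calc ∫ x, deriv W x = ∫ x in Set.Ioc (-(R+1)) (R+1), deriv W x :=
        (setIntegral_eq_integral_of_forall_compl_eq_zero h1).symm
    _ = ∫ x in (-(R+1))..(R+1), deriv W x :=
        (intervalIntegral.integral_of_le hab).symm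
    _ = W (R+1) - W (-(R+1)) :=
        intervalIntegral.integral_deriv_eq_sub (fun x _ => hd x) (hc.intervalIntegrable _ _)
    _ = 0 := by
        rw [hzero (R+1) (by rw [abs_of_nonneg (by linarith)]; linarith),
          hzero (-(R+1)) (by rw [abs_of_nonpos (by linarith)]; linarith)]
        ring

lemma integral_eq_zero_of_hasDerivAt {W e : ℝ → ℝ}
    (h : ∀ x, HasDerivAt W (e x) x) (he : Continuous e)
    (hW : HasCompactSupport W) : ∫ x, e x = 0 := by
  have hde : deriv W = e := funext fun x => (h x).deriv
  calc ∫ x, e x = ∫ x, deriv W x := by rw [hde]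
  _ = 0 := integral_deriv_eq_zero_cs (fun x => (h x).differentiableAt) hW (hde ▸ he)

lemma partA (k : ℕ) (β : ℝ) (hβ : 0 < β) (φ : ℝ → ℝ) (hφ : ContDiff ℝ 3 φ)
    (hφ0 : ∀ x, 0 ≤ φ x) (hφ1 : ∀ x, 0 ≤ deriv φ x) (hφ1' : ∀ x, deriv φ x ≤ β * φ x)
    (hφ3 : ∀ x, |iteratedDeriv 3 φ x| ≤ β ^ 3 * φ x)
    (v : ℝ → ℝ) (hv : ContDiff ℝ (⊤ : ℕ∞) v) (hvs : HasCompactSupport v)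
    (M : ℝ) (hM : ∀ x, |v x| ≤ M) :
    ∫ x, 2 * v x * (-(deriv (deriv (deriv v)) x + v x ^ k * deriv v x)) * φ x ≤
      β ^ 3 * (∫ x, v x ^ 2 * φ x) + 2 * β / (k + 2) * M ^ k * ∫ x, v x ^ 2 * φ x := by
  have hk2 : ((k : ℝ) + 2) ≠ 0 := by positivity
  have hM0 : 0 ≤ M := le_trans (abs_nonneg _) (hM 0)
  -- regularity of v
  have hv' : ContDiff ℝ (⊤ : ℕ∞) v := hv.of_le (by simp)
  have hv1 : ContDiff ℝ (⊤ : ℕ∞) (deriv v) := (contDiff_infty_iff_deriv.mp hv').2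
  have hv2 : ContDiff ℝ (⊤ : ℕ∞) (deriv (deriv v)) := (contDiff_infty_iff_deriv.mp hv1).2
  have hv3 : ContDiff ℝ (⊤ : ℕ∞) (deriv (deriv (deriv v))) := (contDiff_infty_iff_deriv.mp hv2).2
  -- regularity of φ
  have hφ' : ContDiff ℝ ((2 : WithTop ℕ∞) + 1) φ := by
    have h32 : ((2 : WithTop ℕ∞) + 1) = 3 := by norm_num
    rw [h32]; exact hφ
  have hp1 : ContDiff ℝ 2 (deriv φ) := (contDiff_succ_iff_deriv.mp hφ').2.2
  have hp1' : ContDiff ℝ ((1 : WithTop ℕ∞) + 1) (deriv φ) := by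
    have h21 : ((1 : WithTop ℕ∞) + 1) = 2 := by norm_num
    rw [h21]; exact hp1
  have hp2 : ContDiff ℝ 1 (deriv (deriv φ)) := (contDiff_succ_iff_deriv.mp hp1').2.2
  have cp3 : Continuous (deriv (deriv (deriv φ))) := hp2.continuous_deriv le_rfl
  -- compact supports
  have hs1 : HasCompactSupport (deriv v) := hvs.deriv
  have hs2 : HasCompactSupport (deriv (deriv v)) := hs1.deriv
  have hs3 : HasCompactSupport (deriv (deriv (deriv v))) := hs2.deriv
  -- pointwise derivatives
  have hdv : ∀ x, HasDerivAt v (deriv v x) x := fun x =>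
    (hv'.differentiable (by simp) x).hasDerivAt
  have hdv1 : ∀ x, HasDerivAt (deriv v) (deriv (deriv v) x) x := fun x =>
    (hv1.differentiable (by simp) x).hasDerivAt
  have hdv2 : ∀ x, HasDerivAt (deriv (deriv v)) (deriv (deriv (deriv v)) x) x := fun x =>
    (hv2.differentiable (by simp) x).hasDerivAt
  have hdp : ∀ x, HasDerivAt φ (deriv φ x) x := fun x =>
    (hφ.differentiable (by norm_num) x).hasDerivAt
  have hdp1 : ∀ x, HasDerivAt (deriv φ) (deriv (deriv φ) x) x := fun x =>
    (hp1.differentiable (by norm_num) x).hasDerivAt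
  have hdp2 : ∀ x, HasDerivAt (deriv (deriv φ)) (deriv (deriv (deriv φ)) x) x := fun x =>
    (hp2.differentiable one_ne_zero x).hasDerivAt
  -- continuity
  have cv := hv'.continuous
  have cv1 := hv1.continuous
  have cv2 := hv2.continuous
  have cv3 := hv3.continuous
  have cp := hφ.continuous
  have cp1 := hp1.continuous
  have cp2 := hp2.continuous
  -- integrability helper
  have mkint : ∀ (w g : ℝ → ℝ), HasCompactSupport w → Continuous g →
      (∀ x, w x = 0 → g x = 0) → Integrable g :=
    fun w g hw hg h => hg.integrable_of_hasCompactSupport (hcs_of_factor hw h)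
  have int_a1 : Integrable (fun x => 2*deriv v x*deriv (deriv v) x*φ x) :=
    mkint (deriv v) _ hs1 (by fun_prop) (fun x hx => by simp [hx])
  have int_a2 : Integrable (fun x => 2*v x*deriv (deriv (deriv v)) x*φ x) :=
    mkint v _ hvs (by fun_prop) (fun x hx => by simp [hx])
  have int_a3 : Integrable (fun x => 2*v x*deriv (deriv v) x*deriv φ x) :=
    mkint v _ hvs (by fun_prop) (fun x hx => by simp [hx])
  have int_a4 : Integrable (fun x => deriv v x^2*deriv φ x) :=
    mkint (deriv v) _ hs1 (by fun_prop) (fun x hx => by simp [hx])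
  have int_a5 : Integrable (fun x => 2*v x*deriv v x*deriv (deriv φ) x) :=
    mkint v _ hvs (by fun_prop) (fun x hx => by simp [hx])
  have int_a6 : Integrable (fun x => v x^2*deriv (deriv (deriv φ)) x) :=
    mkint v _ hvs (by fun_prop) (fun x hx => by simp [hx])
  have int_c : Integrable (fun x => v x^(k+2)*deriv φ x) :=
    mkint v _ hvs (by fun_prop) (fun x hx => by simp [hx, zero_pow (by omega : k+2 ≠ 0)])
  have int_b : Integrable (fun x => 2*v x^(k+1)*deriv v x*φ x) :=
    mkint v _ hvs (by fun_prop) (fun x hx => by simp [hx, zero_pow (by omega : k+1 ≠ 0)])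
  have int_I : Integrable (fun x => v x^2*φ x) :=
    mkint v _ hvs (by fun_prop) (fun x hx => by simp [hx])
  -- integration by parts identities
  have E1 : ∫ x, (2*deriv v x*deriv (deriv v) x*φ x + 2*v x*deriv (deriv (deriv v)) x*φ x
      + 2*v x*deriv (deriv v) x*deriv φ x) = 0 := by
    apply integral_eq_zero_of_hasDerivAt (W := fun x => 2*v x*deriv (deriv v) x*φ x)
    · intro x
      have h := (((hdv x).const_mul 2).mul (hdv2 x)).mul (hdp x)
      refine h.congr_deriv ?_
      simp only [Pi.mul_apply, Pi.pow_apply]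
      ring
    · fun_prop
    · exact hcs_of_factor hvs (fun x hx => by simp [hx])
  have E2 : ∫ x, (2*deriv v x*deriv (deriv v) x*φ x + deriv v x^2*deriv φ x) = 0 := by
    apply integral_eq_zero_of_hasDerivAt (W := fun x => deriv v x^2*φ x)
    · intro x
      have h := ((hdv1 x).pow 2).mul (hdp x)
      refine h.congr_deriv ?_
      simp only [Pi.mul_apply, Pi.pow_apply]
      push_cast
      ring
    · fun_prop
    · exact hcs_of_factor hs1 (fun x hx => by simp [hx])
  have E3 : ∫ x, (2*v x*deriv v x*deriv (deriv φ) x + v x^2*deriv (deriv (deriv φ)) x) = 0 := by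
    apply integral_eq_zero_of_hasDerivAt (W := fun x => v x^2*deriv (deriv φ) x)
    · intro x
      have h := ((hdv x).pow 2).mul (hdp2 x)
      refine h.congr_deriv ?_
      simp only [Pi.mul_apply, Pi.pow_apply]
      push_cast
      ring
    · fun_prop
    · exact hcs_of_factor hvs (fun x hx => by simp [hx])
  have E4 : ∫ x, (2*(deriv v x^2*deriv φ x) + 2*v x*deriv (deriv v) x*deriv φ x
      + 2*v x*deriv v x*deriv (deriv φ) x) = 0 := by
    apply integral_eq_zero_of_hasDerivAt (W := fun x => 2*v x*deriv v x*deriv φ x)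
    · intro x
      have h := (((hdv x).const_mul 2).mul (hdv1 x)).mul (hdp1 x)
      refine h.congr_deriv ?_
      simp only [Pi.mul_apply, Pi.pow_apply]
      ring
    · fun_prop
    · exact hcs_of_factor hvs (fun x hx => by simp [hx])
  have E5 : ∫ x, (2*v x^(k+1)*deriv v x*φ x + 2/((k:ℝ)+2)*(v x^(k+2)*deriv φ x)) = 0 := by
    apply integral_eq_zero_of_hasDerivAt (W := fun x => 2/((k:ℝ)+2)*v x^(k+2)*φ x)
    · intro x
      have h := (((hdv x).pow (k+2)).const_mul (2/((k:ℝ)+2))).mul (hdp x)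
      refine h.congr_deriv ?_
      simp only [Pi.mul_apply, Pi.pow_apply]
      have e1 : k+2-1 = k+1 := rfl
      rw [e1]
      push_cast
      field_simp
    · fun_prop
    · exact hcs_of_factor hvs (fun x hx => by simp [hx, zero_pow (by omega : k+2 ≠ 0)])
  -- expand the sums
  have int_a12 : Integrable (fun x => 2*deriv v x*deriv (deriv v) x*φ x
      + 2*v x*deriv (deriv (deriv v)) x*φ x) := int_a1.add int_a2
  have int_a4' : Integrable (fun x => 2*(deriv v x^2*deriv φ x)) := int_a4.const_mul 2
  have int_a43 : Integrable (fun x => 2*(deriv v x^2*deriv φ x)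
      + 2*v x*deriv (deriv v) x*deriv φ x) := int_a4'.add int_a3
  have int_c' : Integrable (fun x => 2/((k:ℝ)+2)*(v x^(k+2)*deriv φ x)) := int_c.const_mul _
  rw [integral_add int_a12 int_a3, integral_add int_a1 int_a2] at E1
  rw [integral_add int_a1 int_a4] at E2
  rw [integral_add int_a5 int_a6] at E3
  rw [integral_add int_a43 int_a5, integral_add int_a4' int_a3, integral_const_mul] at E4
  rw [integral_add int_b int_c', integral_const_mul] at E5
  -- rewrite goal integrand
  rw [show (fun x => 2 * v x * (-(deriv (deriv (deriv v)) x + v x ^ k * deriv v x)) * φ x)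
      = (fun x => -(2*v x*deriv (deriv (deriv v)) x*φ x) - 2*v x^(k+1)*deriv v x*φ x) from
    funext fun x => by ring]
  have int_a2n : Integrable (fun x => -(2*v x*deriv (deriv (deriv v)) x*φ x)) := int_a2.neg
  rw [integral_sub int_a2n int_b, integral_neg]
  -- bounds
  have ha4 : 0 ≤ ∫ x, deriv v x^2*deriv φ x :=
    integral_nonneg fun x => mul_nonneg (sq_nonneg _) (hφ1 x)
  have hiter3 : ∀ x, deriv (deriv (deriv φ)) x ≤ β^3*φ x := by
    intro x
    have h := hφ3 x
    rw [show (3:ℕ) = 2+1 from rfl, iteratedDeriv_succ, show (2:ℕ) = 1+1 from rfl,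
      iteratedDeriv_succ, iteratedDeriv_one] at h
    exact (le_abs_self _).trans h
  have ha6 : ∫ x, v x^2*deriv (deriv (deriv φ)) x ≤ β^3*∫ x, v x^2*φ x := by
    rw [← integral_const_mul]
    apply integral_mono int_a6 (int_I.const_mul _)
    intro x
    have key := mul_le_mul_of_nonneg_left (hiter3 x) (sq_nonneg (v x))
    exact key.trans_eq (by ring)
  have hc : ∫ x, v x^(k+2)*deriv φ x ≤ β*M^k*∫ x, v x^2*φ x := by
    rw [← integral_const_mul]
    apply integral_mono int_c (int_I.const_mul _)
    intro x
    have h1 : v x^k ≤ M^k := by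
      calc v x^k ≤ |v x^k| := le_abs_self _
        _ = |v x|^k := abs_pow _ _
        _ ≤ M^k := pow_le_pow_left₀ (abs_nonneg _) (hM x) k
    have h2 : v x^(k+2) ≤ M^k*v x^2 := by
      have := mul_le_mul_of_nonneg_right h1 (sq_nonneg (v x))
      calc v x^(k+2) = v x^k*v x^2 := by ring
        _ ≤ M^k*v x^2 := this
    calc v x^(k+2)*deriv φ x ≤ (M^k*v x^2)*deriv φ x :=
          mul_le_mul_of_nonneg_right h2 (hφ1 x)
      _ ≤ (M^k*v x^2)*(β*φ x) := by
          apply mul_le_mul_of_nonneg_left (hφ1' x)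
          positivity
      _ = β*M^k*(v x^2*φ x) := by ring
  -- combine
  have h2k : (0:ℝ) ≤ 2/((k:ℝ)+2) := by positivity
  have hc' := mul_le_mul_of_nonneg_left hc h2k
  have hrhs : 2*β/((k:ℝ)+2)*M^k*∫ x, v x^2*φ x = 2/((k:ℝ)+2)*(β*M^k*∫ x, v x^2*φ x) := by
    ring
  push_cast
  linarith [E1, E2, E3, E4, E5, ha4, ha6, hc']


noncomputable def pdx (f : ℝ × ℝ → ℝ) : ℝ × ℝ → ℝ := fun p => deriv (fun x => f (x, p.2)) p.1
noncomputable def pdt (f : ℝ × ℝ → ℝ) : ℝ × ℝ → ℝ := fun p => deriv (fun t => f (p.1, t)) p.2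

theorem stmt1 (k : ℕ) (hk : 0 < k) (β : ℝ) (hβ : 0 < β) (φ : ℝ → ℝ)
    (hφ : ContDiff ℝ 3 φ) (hφ0 : ∀ x, 0 ≤ φ x)
    (hφ1 : ∀ x, 0 ≤ deriv φ x) (hφ1' : ∀ x, deriv φ x ≤ β * φ x)
    (hφ2 : ∀ x, |iteratedDeriv 2 φ x| ≤ β ^ 2 * φ x)
    (hφ3 : ∀ x, |iteratedDeriv 3 φ x| ≤ β ^ 3 * φ x)
    (u : ℝ × ℝ → ℝ) (K : ℝ → ℝ)
    (hsmooth : ContDiff ℝ (⊤ : ℕ∞) u)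
    (hdecay : ∀ t : ℝ, HasCompactSupport (fun x => u (x, t)))
    (hpde : ∀ p : ℝ × ℝ, pdt u p + pdx (pdx (pdx u)) p + (u p) ^ k * pdx u p = 0)
    (hK : ∀ x t : ℝ, |u (x, t)| ≤ K t) :
    ∀ t ∈ Set.Icc (0:ℝ) 1,
      deriv (fun s => ∫ x, (u (x, s)) ^ 2 * φ x) t ≤
        β ^ 3 * (∫ x, (u (x, t)) ^ 2 * φ x) +
          2 * β / (k + 2) * (K t) ^ k * ∫ x, (u (x, t)) ^ 2 * φ x := by
  intro t ht
  have hu_cont : Continuous u := hsmooth.continuous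
  have hud : Differentiable ℝ u := hsmooth.differentiable (by simp)
  have hfd : ∀ p : ℝ × ℝ, HasDerivAt (fun s => u (p.1, s)) (fderiv ℝ u p (0, 1)) p.2 := by
    intro p
    have hg : HasDerivAt (fun s : ℝ => (p.1, s)) ((0 : ℝ), (1 : ℝ)) p.2 :=
      (hasDerivAt_const _ _).prodMk (hasDerivAt_id _)
    exact (hud p).hasFDerivAt.comp_hasDerivAt p.2 hg
  have hpdt_eq : ∀ p : ℝ × ℝ, pdt u p = fderiv ℝ u p (0, 1) := fun p => (hfd p).deriv
  have hpdt_cont : Continuous (pdt u) := by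
    have h : pdt u = fun p => fderiv ℝ u p (0, 1) := funext hpdt_eq
    rw [h]
    exact (hsmooth.continuous_fderiv (by simp)).clm_apply continuous_const
  have hdt : ∀ x s : ℝ, HasDerivAt (fun s' => u (x, s')) (pdt u (x, s)) s := by
    intro x s
    have h := hfd (x, s)
    rwa [← hpdt_eq (x, s)] at h
  -- slice facts at time t
  have hVs : HasCompactSupport (fun x => u (x, t)) := hdecay t
  have hVC : ContDiff ℝ (⊤ : ℕ∞) (fun x => u (x, t)) :=
    hsmooth.comp (contDiff_id.prodMk contDiff_const)
  have hM : ∀ x, |u (x, t)| ≤ K t := fun x => hK x t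
  have hxt_cont : Continuous (fun x : ℝ => (x, t)) := continuous_id.prodMk continuous_const
  -- pde in slice form at time t
  have hpt : ∀ x : ℝ, pdt u (x, t)
      = -(deriv (deriv (deriv (fun y => u (y, t)))) x
        + u (x, t) ^ k * deriv (fun y => u (y, t)) x) := by
    intro x
    have h := hpde (x, t)
    have h3 : pdx (pdx (pdx u)) (x, t) = deriv (deriv (deriv (fun y => u (y, t)))) x := rfl
    have h1 : pdx u (x, t) = deriv (fun y => u (y, t)) x := rfl
    rw [h3, h1] at h
    linarith
  -- the spatial estimate
  have hG : (∫ x, 2 * u (x, t) * pdt u (x, t) * φ x) ≤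
      β ^ 3 * (∫ x, (u (x, t)) ^ 2 * φ x)
        + 2 * β / (k + 2) * (K t) ^ k * ∫ x, (u (x, t)) ^ 2 * φ x := by
    have hA := partA k β hβ φ hφ hφ0 hφ1 hφ1' hφ3 (fun x => u (x, t)) hVC hVs (K t) hM
    calc (∫ x, 2 * u (x, t) * pdt u (x, t) * φ x)
        = ∫ x, 2 * u (x, t) * (-(deriv (deriv (deriv (fun y => u (y, t)))) x
            + u (x, t) ^ k * deriv (fun y => u (y, t)) x)) * φ x := by
          congr 1; funext x; rw [hpt x]
      _ ≤ _ := hA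
  -- nonnegativity of the right-hand side
  have hIt : 0 ≤ ∫ x, (u (x, t)) ^ 2 * φ x :=
    integral_nonneg fun x => mul_nonneg (sq_nonneg _) (hφ0 x)
  have hKt : 0 ≤ K t := le_trans (abs_nonneg _) (hK 0 t)
  have hRHS0 : 0 ≤ β ^ 3 * (∫ x, (u (x, t)) ^ 2 * φ x)
      + 2 * β / (k + 2) * (K t) ^ k * ∫ x, (u (x, t)) ^ 2 * φ x := by
    have h3 : (0:ℝ) ≤ (K t) ^ k := pow_nonneg hKt k
    have h1 : (0:ℝ) ≤ β ^ 3 := by positivity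
    have h2 : (0:ℝ) ≤ 2 * β / ((k:ℝ) + 2) := by positivity
    exact add_nonneg (mul_nonneg h1 hIt) (mul_nonneg (mul_nonneg h2 h3) hIt)
  by_cases hdiff : DifferentiableAt ℝ (fun s => ∫ x, (u (x, s)) ^ 2 * φ x) t
  swap
  · rw [deriv_zero_of_not_differentiableAt hdiff]; exact hRHS0
  -- localized integral
  set A := tsupport (fun x => u (x, t)) with hA_def
  have hAc : IsCompact A := hVs
  have hAmeas : MeasurableSet A := (isClosed_tsupport _).measurableSet
  obtain ⟨C, hC⟩ := (hAc.prod (isCompact_Icc (a := t - 1) (b := t + 1))).exists_bound_of_continuousOn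
    (f := fun q : ℝ × ℝ => 2 * u q * pdt u q * φ q.1)
    (((continuous_const.mul hu_cont).mul hpdt_cont).mul
      (hφ.continuous.comp continuous_fst)).continuousOn
  have int_s : ∀ s : ℝ, Integrable (fun x => u (x, s) ^ 2 * φ x) := by
    intro s
    have hc : Continuous (fun x => u (x, s) ^ 2 * φ x) :=
      ((hu_cont.comp (continuous_id.prodMk continuous_const)).pow 2).mul hφ.continuous
    exact hc.integrable_of_hasCompactSupport
      (hcs_of_factor (hdecay s) (fun x hx => by simp [hx]))
  have key := hasDerivAt_integral_of_dominated_loc_of_deriv_le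
    (μ := volume.restrict A) (x₀ := t)
    (F := fun s x => u (x, s) ^ 2 * φ x)
    (F' := fun s x => 2 * u (x, s) * pdt u (x, s) * φ x)
    (bound := fun _ => C) (Metric.ball_mem_nhds t one_pos)
    (Filter.Eventually.of_forall fun s =>
      (((hu_cont.comp (continuous_id.prodMk continuous_const)).pow 2).mul
        hφ.continuous).aestronglyMeasurable)
    ((int_s t).restrict)
    (((((continuous_const.mul (hu_cont.comp hxt_cont)).mul
        (hpdt_cont.comp hxt_cont)).mul hφ.continuous)).aestronglyMeasurable)
    (by
      rw [ae_restrict_iff' hAmeas]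
      apply Filter.Eventually.of_forall
      intro x hx s hs
      have hmem : ((x, s) : ℝ × ℝ) ∈ A ×ˢ Set.Icc (t - 1) (t + 1) := by
        refine ⟨hx, ?_⟩
        rw [Metric.mem_ball, Real.dist_eq] at hs
        have h1 := abs_lt.mp hs
        constructor <;> · simp; linarith [h1.1, h1.2]
      exact hC (x, s) hmem)
    ((integrableOn_const hAc.measure_lt_top.ne))
    (Filter.Eventually.of_forall (fun x => by
      intro s hs
      have h := ((hdt x s).pow 2).mul_const (φ x)
      refine h.congr_deriv ?_
      norm_num))
  have hJ := key.2
  have hDG : (∫ x, 2 * u (x, t) * pdt u (x, t) * φ x ∂(volume.restrict A))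
      = ∫ x, 2 * u (x, t) * pdt u (x, t) * φ x := by
    apply setIntegral_eq_integral_of_forall_compl_eq_zero
    intro x hx
    have h0 : u (x, t) = 0 := image_eq_zero_of_notMem_tsupport (f := fun y => u (y, t)) hx
    simp [h0]
  have hJtIt : (∫ x, u (x, t) ^ 2 * φ x ∂(volume.restrict A)) = ∫ x, u (x, t) ^ 2 * φ x := by
    apply setIntegral_eq_integral_of_forall_compl_eq_zero
    intro x hx
    have h0 : u (x, t) = 0 := image_eq_zero_of_notMem_tsupport (f := fun y => u (y, t)) hx
    simp [h0]
  have hJle : ∀ s : ℝ, (∫ x, u (x, s) ^ 2 * φ x ∂(volume.restrict A))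
      ≤ ∫ x, u (x, s) ^ 2 * φ x := fun s =>
    setIntegral_le_integral (int_s s) (Filter.Eventually.of_forall fun x => mul_nonneg (sq_nonneg _) (hφ0 x))
  have hsub : 𝓝[<] t ≤ 𝓝[≠] t :=
    nhdsWithin_mono t (fun s hs => ne_of_lt hs)
  have hTI : Filter.Tendsto (slope (fun s => ∫ x, (u (x, s)) ^ 2 * φ x) t) (𝓝[<] t)
      (𝓝 (deriv (fun s => ∫ x, (u (x, s)) ^ 2 * φ x) t)) :=
    (hasDerivAt_iff_tendsto_slope.mp hdiff.hasDerivAt).mono_left hsub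
  have hTJ : Filter.Tendsto (slope (fun s => ∫ x, u (x, s) ^ 2 * φ x ∂(volume.restrict A)) t)
      (𝓝[<] t) (𝓝 (∫ x, 2 * u (x, t) * pdt u (x, t) * φ x ∂(volume.restrict A))) :=
    (hasDerivAt_iff_tendsto_slope.mp hJ).mono_left hsub
  have hle : ∀ s ∈ Set.Iio t, slope (fun s => ∫ x, (u (x, s)) ^ 2 * φ x) t s
      ≤ slope (fun s => ∫ x, u (x, s) ^ 2 * φ x ∂(volume.restrict A)) t s := by
    intro s hs
    rw [slope_def_field, slope_def_field,
      div_le_div_right_of_neg (by simp only [Set.mem_Iio] at hs; linarith : s - t < 0)]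
    calc (∫ x, u (x, s) ^ 2 * φ x ∂(volume.restrict A))
          - (∫ x, u (x, t) ^ 2 * φ x ∂(volume.restrict A))
        = (∫ x, u (x, s) ^ 2 * φ x ∂(volume.restrict A)) - ∫ x, u (x, t) ^ 2 * φ x := by
          rw [hJtIt]
      _ ≤ (∫ x, u (x, s) ^ 2 * φ x) - ∫ x, u (x, t) ^ 2 * φ x :=
          sub_le_sub_right (hJle s) _
  have hfinal := le_of_tendsto_of_tendsto hTI hTJ (eventually_nhdsWithin_of_forall hle)
  calc deriv (fun s => ∫ x, (u (x, s)) ^ 2 * φ x) t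
      ≤ ∫ x, 2 * u (x, t) * pdt u (x, t) * φ x ∂(volume.restrict A) := hfinal
    _ = ∫ x, 2 * u (x, t) * pdt u (x, t) * φ x := hDG
    _ ≤ _ := hG
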